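/- Let Y = αX_1 + X_2 with α > 0, where X_1 is Bernoulli distributed with success probability p ∈ (0,1), X_2 is independent of X_1 with continuous distribution function F, and D^1 denotes the Cramér–von Mises index of Y with respect to X_1. Then D^1 = p(1−p) ∫_ℝ (F(t) − F(t−α))² dμ_Y(t), where μ_Y = (1−p)·law(X_2) + p·law(X_2 + α) is the law of Y; equivalently D^1 = p(1−p) ∫_ℝ (F(t) − F(t−α))² [(1−p) dF(t) + p dF(t−α)]. -/

import Mathlib

open MeasureTheory ProbabilityTheory Filter

/-- **Cramér–von Mises index of `Y = αX₁ + X₂` with respect to the Bernoulli input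
`X₁`.** `D¹ = p(1−p) ∫ (F(t) − F(t−α))² dμ_Y(t)`, where
`μ_Y = (1−p)·law(X₂) + p·law(X₂ + α)` is the law of `Y`. -/
theorem cramer_von_mises_bernoulli_first_input
    {Ω : Type*} [m0 : MeasurableSpace Ω] (P : Measure Ω) [IsProbabilityMeasure P]
    (α p : ℝ) (hα : 0 < α) (hp0 : 0 < p) (hp1 : p < 1)
    (X1 X2 : Ω → ℝ) (hX1 : Measurable X1) (hX2 : Measurable X2)
    (hX1law : Measure.map X1 P
      = ENNReal.ofReal p • Measure.dirac (1 : ℝ)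
        + ENNReal.ofReal (1 - p) • Measure.dirac (0 : ℝ))
    (hindep : IndepFun X1 X2 P)
    (F : ℝ → ℝ) (hF : ∀ t, F t = (P {ω | X2 ω ≤ t}).toReal) (hFcont : Continuous F)
    (Y : Ω → ℝ) (hY : ∀ ω, Y ω = α * X1 ω + X2 ω)
    (FY : ℝ → ℝ) (hFY : ∀ t, FY t = (P {ω | Y ω ≤ t}).toReal)
    (D1 : ℝ)
    (hD1 : D1 = ∫ t, (∫ ω,
      (FY t - (MeasureTheory.condExp
        (MeasurableSpace.comap X1 inferInstance) P
        (Set.indicator {ω' | Y ω' ≤ t} fun _ => (1 : ℝ))) ω) ^ 2 ∂P)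
      ∂(Measure.map Y P)) :
    D1 = p * (1 - p) * ∫ t, (F t - F (t - α)) ^ 2 ∂(Measure.map Y P)
      ∧ Measure.map Y P
        = ENNReal.ofReal (1 - p) • Measure.map X2 P
          + ENNReal.ofReal p • Measure.map (fun ω => X2 ω + α) P := by
  classical
  have hq0' : (0:ℝ) ≤ 1 - p := by linarith
  have hYm : Measurable Y := by
    have hYe : Y = fun ω => α * X1 ω + X2 ω := funext hY
    rw [hYe]; exact (hX1.const_mul α).add hX2
  set A : Set Ω := {ω | X1 ω = 0} with hAdef
  set B : Set Ω := {ω | X1 ω = 1} with hBdef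
  have hAm : MeasurableSet A := hX1 (measurableSet_singleton 0)
  have hBm : MeasurableSet B := hX1 (measurableSet_singleton 1)
  -- measures of A, B
  have hPA : P A = ENNReal.ofReal (1 - p) := by
    have h := Measure.map_apply (μ := P) hX1 (measurableSet_singleton (0:ℝ))
    rw [hX1law] at h
    have : P A = P (X1 ⁻¹' {0}) := rfl
    rw [this, ← h]
    simp [Measure.dirac_apply]
  have hPB : P B = ENNReal.ofReal p := by
    have h := Measure.map_apply (μ := P) hX1 (measurableSet_singleton (1:ℝ))
    rw [hX1law] at h
    have : P B = P (X1 ⁻¹' {1}) := rfl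
    rw [this, ← h]
    simp [Measure.dirac_apply]
  have hPAr : (P A).toReal = 1 - p := by rw [hPA, ENNReal.toReal_ofReal hq0']
  have hPBr : (P B).toReal = p := by rw [hPB, ENNReal.toReal_ofReal hp0.le]
  -- null complement
  have hnull : P ((A ∪ B)ᶜ) = 0 := by
    have hm01 : MeasurableSet (({0} ∪ {1} : Set ℝ))ᶜ :=
      ((measurableSet_singleton (0:ℝ)).union (measurableSet_singleton 1)).compl
    have h := Measure.map_apply (μ := P) hX1 hm01
    rw [hX1law] at h
    have he : X1 ⁻¹' (({0} ∪ {1} : Set ℝ))ᶜ = (A ∪ B)ᶜ := by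
      ext ω; simp [hAdef, hBdef, not_or]; tauto
    rw [he] at h
    rw [← h]
    simp [Measure.dirac_apply]
  -- splitting lemma
  have hsplit : ∀ E : Set Ω, MeasurableSet E → P E = P (E ∩ A) + P (E ∩ B) := by
    intro E hE
    have hAB : MeasurableSet (A ∪ B) := hAm.union hBm
    have h1 : P (E ∩ (A ∪ B)) + P (E \ (A ∪ B)) = P E := measure_inter_add_diff E hAB
    have h2 : P (E \ (A ∪ B)) = 0 :=
      measure_mono_null (fun ω hω => hω.2) hnull
    have hdisj : Disjoint (E ∩ A) (E ∩ B) := by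
      rw [Set.disjoint_left]
      rintro ω ⟨-, h0⟩ ⟨-, h1'⟩
      simp only [hAdef, hBdef, Set.mem_setOf_eq] at h0 h1'
      rw [h0] at h1'; norm_num at h1'
    have h3 : P (E ∩ (A ∪ B)) = P (E ∩ A) + P (E ∩ B) := by
      rw [Set.inter_union_distrib_left]
      exact measure_union hdisj (hE.inter hBm)
    rw [← h1, h2, add_zero, h3]
  -- independence
  have hind : ∀ (c : ℝ) (s : Set ℝ), MeasurableSet s →
      P ({ω | X1 ω = c} ∩ X2 ⁻¹' s) = P {ω | X1 ω = c} * P (X2 ⁻¹' s) := by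
    intro c s hs
    exact hindep.measure_inter_preimage_eq_mul {c} s (measurableSet_singleton c) hs
  -- set identities on A and B
  have e1 : ∀ s : Set ℝ, Y ⁻¹' s ∩ A = X2 ⁻¹' s ∩ A := by
    intro s; ext ω
    simp only [Set.mem_inter_iff, Set.mem_preimage, hAdef, Set.mem_setOf_eq]
    have hYω : X1 ω = 0 → Y ω = X2 ω := by
      intro h0; rw [hY ω, h0]; ring
    constructor
    · rintro ⟨h1, h2⟩; exact ⟨by rwa [hYω h2] at h1, h2⟩
    · rintro ⟨h1, h2⟩; exact ⟨by rwa [hYω h2], h2⟩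
  have e2 : ∀ s : Set ℝ, Y ⁻¹' s ∩ B = (fun ω => X2 ω + α) ⁻¹' s ∩ B := by
    intro s; ext ω
    simp only [Set.mem_inter_iff, Set.mem_preimage, hBdef, Set.mem_setOf_eq]
    have hYω : X1 ω = 1 → Y ω = X2 ω + α := by
      intro h1; rw [hY ω, h1]; ring
    constructor
    · rintro ⟨h1, h2⟩; exact ⟨by rwa [hYω h2] at h1, h2⟩
    · rintro ⟨h1, h2⟩; exact ⟨by rwa [hYω h2], h2⟩
  have hX2α : Measurable (fun ω => X2 ω + α) := hX2.add_const α
  -- law of Y on measurable sets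
  have hYlaw : ∀ s : Set ℝ, MeasurableSet s →
      P (Y ⁻¹' s) = ENNReal.ofReal (1 - p) * P (X2 ⁻¹' s)
        + ENNReal.ofReal p * P ((fun ω => X2 ω + α) ⁻¹' s) := by
    intro s hs
    rw [hsplit _ (hYm hs), e1 s, e2 s]
    have i1 : P (X2 ⁻¹' s ∩ A) = P A * P (X2 ⁻¹' s) := by
      rw [Set.inter_comm]; exact hind 0 s hs
    have i2 : P ((fun ω => X2 ω + α) ⁻¹' s ∩ B)
        = P B * P ((fun ω => X2 ω + α) ⁻¹' s) := by
      rw [Set.inter_comm]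
      have hpre : (fun ω => X2 ω + α) ⁻¹' s = X2 ⁻¹' ((fun x : ℝ => x + α) ⁻¹' s) := rfl
      rw [hpre]
      exact hind 1 _ ((measurable_add_const α) hs)
    rw [i1, i2, hPA, hPB]
  -- second conjunct
  have hlaw : Measure.map Y P
      = ENNReal.ofReal (1 - p) • Measure.map X2 P
        + ENNReal.ofReal p • Measure.map (fun ω => X2 ω + α) P := by
    ext s hs
    rw [Measure.map_apply hYm hs, hYlaw s hs]
    simp [Measure.map_apply hX2 hs, Measure.map_apply hX2α hs]
  -- FY formula
  have hIic : ∀ t : ℝ, (fun ω => X2 ω + α) ⁻¹' Set.Iic t = X2 ⁻¹' Set.Iic (t - α) := by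
    intro t; ext ω
    simp only [Set.mem_preimage, Set.mem_Iic]
    constructor <;> intro h <;> linarith
  have hFpre : ∀ t : ℝ, F t = (P (X2 ⁻¹' Set.Iic t)).toReal := fun t => hF t
  have hFY' : ∀ t, FY t = (1 - p) * F t + p * F (t - α) := by
    intro t
    have h1 : FY t = (P (Y ⁻¹' Set.Iic t)).toReal := hFY t
    rw [h1, hYlaw _ measurableSet_Iic, hIic t]
    rw [ENNReal.toReal_add (ENNReal.mul_ne_top ENNReal.ofReal_ne_top (measure_ne_top P _))
      (ENNReal.mul_ne_top ENNReal.ofReal_ne_top (measure_ne_top P _)),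
      ENNReal.toReal_mul, ENNReal.toReal_mul, ENNReal.toReal_ofReal hq0',
      ENNReal.toReal_ofReal hp0.le, hFpre t, hFpre (t - α)]
  -- bound on F
  have hF01 : ∀ x, 0 ≤ F x ∧ F x ≤ 1 := by
    intro x
    refine ⟨by rw [hF]; exact ENNReal.toReal_nonneg, ?_⟩
    rw [hF]
    have h1 : P {ω | X2 ω ≤ x} ≤ 1 := prob_le_one
    have := ENNReal.toReal_mono ENNReal.one_ne_top h1
    simpa using this
  -- conditional expectation
  have hm : MeasurableSpace.comap X1 inferInstance ≤ m0 := hX1.comap_le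
  haveI : SigmaFinite (P.trim hm) := by infer_instance
  have hX1m : Measurable[MeasurableSpace.comap X1 inferInstance] X1 :=
    measurable_iff_comap_le.mpr le_rfl
  have hcond : ∀ t : ℝ, (fun ω => F (t - α * X1 ω)) =ᵐ[P]
      MeasureTheory.condExp (MeasurableSpace.comap X1 inferInstance) P (Set.indicator {ω' | Y ω' ≤ t} fun _ => (1 : ℝ)) := by
    intro t
    have hEt : MeasurableSet {ω' | Y ω' ≤ t} := hYm measurableSet_Iic
    have hgm : Measurable (fun ω => F (t - α * X1 ω)) :=
      (hFcont.measurable.comp ((measurable_const.sub ((measurable_id.const_mul α))))).comp hX1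
    have hgint : Integrable (fun ω => F (t - α * X1 ω)) P := by
      refine ⟨hgm.aestronglyMeasurable, HasFiniteIntegral.of_bounded (C := 1) ?_⟩
      refine ae_of_all _ fun ω => ?_
      rw [Real.norm_eq_abs, abs_le]
      constructor
      · linarith [(hF01 (t - α * X1 ω)).1]
      · exact (hF01 (t - α * X1 ω)).2
    refine ae_eq_condExp_of_forall_setIntegral_eq hm
      ((integrable_const (1:ℝ)).indicator hEt) (fun s _ _ => hgint.integrableOn)
      ?_ ?_
    · rintro s ⟨u, hu, rfl⟩ -
      -- decompose g a.e. as indicator sum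
      have haeP : ∀ᵐ ω ∂P, X1 ω = 0 ∨ X1 ω = 1 := by
        rw [ae_iff]
        have : {ω | ¬(X1 ω = 0 ∨ X1 ω = 1)} = (A ∪ B)ᶜ := by
          ext ω; simp [hAdef, hBdef, not_or]
        rw [this]; exact hnull
      have hgφ : (fun ω => F (t - α * X1 ω)) =ᵐ[P]
          fun ω => A.indicator (fun _ => F t) ω + B.indicator (fun _ => F (t - α)) ω := by
        filter_upwards [haeP] with ω hω
        rcases hω with h0 | h1
        · have hωA : ω ∈ A := h0
          have hωB : ω ∉ B := by simp [hBdef, h0]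
          rw [Set.indicator_of_mem hωA, Set.indicator_of_notMem hωB, h0]
          norm_num
        · have hωA : ω ∉ A := by simp [hAdef, h1]
          have hωB : ω ∈ B := h1
          rw [Set.indicator_of_notMem hωA, Set.indicator_of_mem hωB, h1]
          norm_num
      have hum : MeasurableSet (X1 ⁻¹' u) := hX1 hu
      rw [setIntegral_congr_ae hum (hgφ.mono fun ω h _ => h)]
      rw [integral_add (((integrable_const (F t)).indicator hAm).integrableOn)
        (((integrable_const (F (t - α))).indicator hBm).integrableOn),
        setIntegral_indicator hAm, setIntegral_indicator hBm,
        setIntegral_const, setIntegral_const,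
        setIntegral_indicator hEt, setIntegral_const]
      -- now both sides are explicit measures
      have key0 : P (X1 ⁻¹' u ∩ A) = (if (0:ℝ) ∈ u then ENNReal.ofReal (1 - p) else 0) := by
        by_cases h0 : (0:ℝ) ∈ u
        · rw [if_pos h0]
          have : X1 ⁻¹' u ∩ A = A := by
            ext ω; simp only [Set.mem_inter_iff, Set.mem_preimage, hAdef, Set.mem_setOf_eq]
            exact ⟨fun h => h.2, fun h => ⟨by rw [h]; exact h0, h⟩⟩
          rw [this, hPA]
        · rw [if_neg h0]
          have : X1 ⁻¹' u ∩ A = ∅ := by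
            ext ω; simp only [Set.mem_inter_iff, Set.mem_preimage, hAdef, Set.mem_setOf_eq,
              Set.mem_empty_iff_false, iff_false, not_and]
            intro hmem h; rw [h] at hmem; exact h0 hmem
          rw [this, measure_empty]
      have key1 : P (X1 ⁻¹' u ∩ B) = (if (1:ℝ) ∈ u then ENNReal.ofReal p else 0) := by
        by_cases h1 : (1:ℝ) ∈ u
        · rw [if_pos h1]
          have : X1 ⁻¹' u ∩ B = B := by
            ext ω; simp only [Set.mem_inter_iff, Set.mem_preimage, hBdef, Set.mem_setOf_eq]
            exact ⟨fun h => h.2, fun h => ⟨by rw [h]; exact h1, h⟩⟩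
          rw [this, hPB]
        · rw [if_neg h1]
          have : X1 ⁻¹' u ∩ B = ∅ := by
            ext ω; simp only [Set.mem_inter_iff, Set.mem_preimage, hBdef, Set.mem_setOf_eq,
              Set.mem_empty_iff_false, iff_false, not_and]
            intro hmem h; rw [h] at hmem; exact h1 hmem
          rw [this, measure_empty]
      have keyE : P (X1 ⁻¹' u ∩ {ω' | Y ω' ≤ t})
          = (if (0:ℝ) ∈ u then ENNReal.ofReal (1 - p) * P (X2 ⁻¹' Set.Iic t) else 0)
            + (if (1:ℝ) ∈ u then ENNReal.ofReal p * P (X2 ⁻¹' Set.Iic (t - α)) else 0) := by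
        rw [hsplit _ (hum.inter hEt)]
        have hEIic : {ω' | Y ω' ≤ t} = Y ⁻¹' Set.Iic t := rfl
        have hA' : X1 ⁻¹' u ∩ {ω' | Y ω' ≤ t} ∩ A
            = X1 ⁻¹' u ∩ (X2 ⁻¹' Set.Iic t ∩ A) := by
          rw [Set.inter_assoc, hEIic, e1]
        have hB' : X1 ⁻¹' u ∩ {ω' | Y ω' ≤ t} ∩ B
            = X1 ⁻¹' u ∩ ((fun ω => X2 ω + α) ⁻¹' Set.Iic t ∩ B) := by
          rw [Set.inter_assoc, hEIic, e2]
        rw [hA', hB']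
        congr 1
        · by_cases h0 : (0:ℝ) ∈ u
          · rw [if_pos h0]
            have : X1 ⁻¹' u ∩ (X2 ⁻¹' Set.Iic t ∩ A) = A ∩ X2 ⁻¹' Set.Iic t := by
              ext ω
              simp only [Set.mem_inter_iff, Set.mem_preimage, hAdef, Set.mem_setOf_eq]
              constructor
              · rintro ⟨hu', hx2, hωA⟩; exact ⟨hωA, hx2⟩
              · rintro ⟨hωA, hx2⟩; exact ⟨by rw [hωA]; exact h0, hx2, hωA⟩
            rw [this, hind 0 _ measurableSet_Iic, hPA]
          · rw [if_neg h0]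
            have : X1 ⁻¹' u ∩ (X2 ⁻¹' Set.Iic t ∩ A) = ∅ := by
              ext ω
              simp only [Set.mem_inter_iff, Set.mem_preimage, hAdef, Set.mem_setOf_eq,
                Set.mem_empty_iff_false, iff_false]
              rintro ⟨hu', hx2, hωA⟩; rw [hωA] at hu'; exact h0 hu'
            rw [this, measure_empty]
        · by_cases h1 : (1:ℝ) ∈ u
          · rw [if_pos h1]
            have hrw : (fun ω => X2 ω + α) ⁻¹' Set.Iic t = X2 ⁻¹' Set.Iic (t - α) := hIic t
            have : X1 ⁻¹' u ∩ ((fun ω => X2 ω + α) ⁻¹' Set.Iic t ∩ B)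
                = B ∩ X2 ⁻¹' Set.Iic (t - α) := by
              rw [hrw]
              ext ω
              simp only [Set.mem_inter_iff, Set.mem_preimage, hBdef, Set.mem_setOf_eq]
              constructor
              · rintro ⟨hu', hx2, hωB⟩; exact ⟨hωB, hx2⟩
              · rintro ⟨hωB, hx2⟩; exact ⟨by rw [hωB]; exact h1, hx2, hωB⟩
            rw [this, hind 1 _ measurableSet_Iic, hPB]
          · rw [if_neg h1]
            have : X1 ⁻¹' u ∩ ((fun ω => X2 ω + α) ⁻¹' Set.Iic t ∩ B) = ∅ := by
              ext ω
              simp only [Set.mem_inter_iff, Set.mem_preimage, hBdef, Set.mem_setOf_eq,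
                Set.mem_empty_iff_false, iff_false]
              rintro ⟨hu', hx2, hωB⟩; rw [hωB] at hu'; exact h1 hu'
            rw [this, measure_empty]
      simp only [Measure.real_def]
      rw [keyE, key0, key1]
      by_cases h0 : (0:ℝ) ∈ u <;> by_cases h1 : (1:ℝ) ∈ u <;>
        simp [h0, h1, smul_eq_mul, ENNReal.toReal_add, ENNReal.toReal_mul,
          ENNReal.mul_ne_top, ENNReal.ofReal_ne_top, measure_ne_top,
          ENNReal.toReal_ofReal hq0', ENNReal.toReal_ofReal hp0.le, hFpre t, hFpre (t - α)] <;>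
        ring
    · refine StronglyMeasurable.aestronglyMeasurable ?_
      refine Measurable.stronglyMeasurable ?_
      exact (hFcont.measurable.comp ((measurable_const.sub (measurable_id.const_mul α)))).comp hX1m
  -- inner integral computation
  have hinner : ∀ t : ℝ,
      (∫ ω, (FY t - (MeasureTheory.condExp (MeasurableSpace.comap X1 inferInstance) P
        (Set.indicator {ω' | Y ω' ≤ t} fun _ => (1 : ℝ))) ω) ^ 2 ∂P)
      = p * (1 - p) * (F t - F (t - α)) ^ 2 := by
    intro t
    have haeP : ∀ᵐ ω ∂P, X1 ω = 0 ∨ X1 ω = 1 := by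
      rw [ae_iff]
      have : {ω | ¬(X1 ω = 0 ∨ X1 ω = 1)} = (A ∪ B)ᶜ := by
        ext ω; simp [hAdef, hBdef, not_or]
      rw [this]; exact hnull
    have step1 : (fun ω => (FY t - (MeasureTheory.condExp (MeasurableSpace.comap X1 inferInstance) P
        (Set.indicator {ω' | Y ω' ≤ t} fun _ => (1 : ℝ))) ω) ^ 2) =ᵐ[P]
        fun ω => A.indicator (fun _ => (FY t - F t) ^ 2) ω
          + B.indicator (fun _ => (FY t - F (t - α)) ^ 2) ω := by
      filter_upwards [haeP, hcond t] with ω hω hc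
      rw [← hc]
      rcases hω with h0 | h1
      · have hωA : ω ∈ A := h0
        have hωB : ω ∉ B := by simp [hBdef, h0]
        rw [Set.indicator_of_mem hωA, Set.indicator_of_notMem hωB, h0]
        norm_num
      · have hωA : ω ∉ A := by simp [hAdef, h1]
        have hωB : ω ∈ B := h1
        rw [Set.indicator_of_notMem hωA, Set.indicator_of_mem hωB, h1]
        norm_num
    rw [integral_congr_ae step1, integral_add
      ((integrable_const _).indicator hAm) ((integrable_const _).indicator hBm),
      integral_indicator hAm, integral_indicator hBm, setIntegral_const, setIntegral_const,
      Measure.real_def, Measure.real_def, hPAr, hPBr, smul_eq_mul, smul_eq_mul, hFY' t]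
    ring
  constructor
  · rw [hD1]
    have : ∀ t : ℝ, (∫ ω, (FY t - (MeasureTheory.condExp (MeasurableSpace.comap X1 inferInstance) P
        (Set.indicator {ω' | Y ω' ≤ t} fun _ => (1 : ℝ))) ω) ^ 2 ∂P)
        = p * (1 - p) * (F t - F (t - α)) ^ 2 := hinner
    calc ∫ t, (∫ ω, (FY t - (MeasureTheory.condExp (MeasurableSpace.comap X1 inferInstance) P
          (Set.indicator {ω' | Y ω' ≤ t} fun _ => (1 : ℝ))) ω) ^ 2 ∂P) ∂(Measure.map Y P)
        = ∫ t, p * (1 - p) * (F t - F (t - α)) ^ 2 ∂(Measure.map Y P) := by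
          exact integral_congr_ae (ae_of_all _ this)
      _ = p * (1 - p) * ∫ t, (F t - F (t - α)) ^ 2 ∂(Measure.map Y P) := by
          rw [integral_const_mul]
  · exact hlaw
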